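/- arXiv:2404.13540 — 2 statements merged into one kernel-verified Lean document; each statement's English description precedes it below -/
import Mathlib

section
/- Let E ⊂ ℝ^n be a nonempty closed set, 2 ≤ k ≤ n+1, and fix a = {a_1,...,a_k} ⊂ S^{n-1} in generic position and d > 0. Then there exist ε, δ, t, r > 0, depending only on a and d, such that for every x ∈ M(a,d,ε,δ) one has ((x + P_r) \ {x}) ∩ B(x,t) ∩ M(a,d,ε,δ) = ∅, where P is the (k−1)-dimensional linear subspace parallel to the affine span of a and P_r = {v : dist(v,P) < r‖v‖}. -/
open MeasureTheory

/-- The set of nearest points of `x` in `E`. -/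
def nearestPts {n : ℕ} (E : Set (EuclideanSpace ℝ (Fin n))) (x : EuclideanSpace ℝ (Fin n)) :
    Set (EuclideanSpace ℝ (Fin n)) :=
  {y ∈ E | dist x y = Metric.infDist x E}

/-- `MSet E a d ε δ` is the set of points `x` of the `k`-medial axis of `E` with
`|dist(x,E) - d| < δ` and `d_M(x,a) < ε`, i.e. the normalized nearest-point directions of `x`
contain a generic `k`-point subset `b` with `d_A(b,a) < ε`. -/
def MSet {n k : ℕ} (E : Set (EuclideanSpace ℝ (Fin n)))
    (a : Fin k → EuclideanSpace ℝ (Fin n)) (d ε δ : ℝ) :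
    Set (EuclideanSpace ℝ (Fin n)) :=
  {x | 0 < Metric.infDist x E ∧ |Metric.infDist x E - d| < δ ∧
    ∃ (b : Fin k → EuclideanSpace ℝ (Fin n)) (σ : Equiv.Perm (Fin k)),
      (∀ i, ‖b i‖ = 1 ∧ x + (Metric.infDist x E) • b i ∈ nearestPts E x) ∧
      AffineIndependent ℝ b ∧
      ∀ i, ‖b i - a (σ i)‖ < ε}

/-!
The nearest-point map of `E` is monotone: if `y, y'` are nearest points of `E` to `x, x'`, then
`⟪x' - x, y' - y⟫ ≥ 0`. For `x` and `x + v` in `MSet E a d ε δ`, picking nearest points with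
`y - x ≈ d • a m` and `y' - (x + v) ≈ d • a m'` turns this into
`d * ⟪v, a m - a m'⟫ ≤ ‖v‖² + O(ε + δ) * ‖v‖`. So for short `v` the inner products of `v` with the
differences `a m - a m'`, which span `P`, are a small multiple of `‖v‖`. As `P` is
finite-dimensional, the orthogonal projection of `v` onto `P` is then short, which is incompatible
with `v` lying in the cone `dist(v, P) < ‖v‖ / 2`.
-/

open Metric Submodule
open scoped RealInnerProductSpace NNReal

section InnerProductSpace

variable {F : Type*} [NormedAddCommGroup F] [InnerProductSpace ℝ F]

theorem two_mul_inner_sub_sub_eq (x x' y y' : F) :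
    2 * ⟪x' - x, y' - y⟫ = ‖x - y'‖ ^ 2 + ‖x' - y‖ ^ 2 - ‖x - y‖ ^ 2 - ‖x' - y'‖ ^ 2 := by
  simp only [← real_inner_self_eq_norm_sq, inner_sub_left, inner_sub_right, real_inner_comm]
  ring

theorem inner_sub_sub_nonneg_of_dist_le {x x' y y' : F} (h : dist x y ≤ dist x y')
    (h' : dist x' y' ≤ dist x' y) : 0 ≤ ⟪x' - x, y' - y⟫ := by
  rw [dist_eq_norm, dist_eq_norm] at h h'
  have hsq := pow_le_pow_left₀ (norm_nonneg _) h 2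
  have hsq' := pow_le_pow_left₀ (norm_nonneg _) h' 2
  linarith [two_mul_inner_sub_sub_eq x x' y y']

theorem exists_norm_le_mul_of_abs_inner_le {S : Set F} (hS : S.Finite) :
    ∃ K : ℝ≥0, ∀ w ∈ span ℝ S, ∀ c, 0 ≤ c → (∀ u ∈ S, |⟪u, w⟫| ≤ c) → ‖w‖ ≤ K * c := by
  have := hS.fintype
  have := FiniteDimensional.span_of_finite ℝ hS
  let T : span ℝ S →ₗ[ℝ] (S → ℝ) :=
    LinearMap.pi fun u => (innerₛₗ ℝ (u : F)).comp (span ℝ S).subtype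
  have hT : LinearMap.ker T = ⊥ := by
    refine LinearMap.ker_eq_bot'.2 fun ⟨w, hw⟩ hTw => Subtype.ext ?_
    have hS_le : span ℝ S ≤ LinearMap.ker (innerₛₗ ℝ w) :=
      span_le.2 fun u hu => by
        simpa [T, real_inner_comm] using congrFun hTw ⟨u, hu⟩
    exact inner_self_eq_zero.1 (hS_le hw)
  obtain ⟨K, -, hK⟩ := T.exists_antilipschitzWith hT
  refine ⟨K, fun w hw c hc hwc => ?_⟩
  have hTw : ‖T ⟨w, hw⟩‖ ≤ c := (pi_norm_le_iff_of_nonneg hc).2 fun u => by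
    simpa [T] using hwc u u.2
  calc ‖w‖ = ‖(⟨w, hw⟩ : span ℝ S)‖ := rfl
    _ ≤ K * ‖T ⟨w, hw⟩‖ := by simpa using hK.le_mul_dist ⟨w, hw⟩ 0
    _ ≤ K * c := by gcongr

theorem exists_norm_le_mul_add_infDist_span {S : Set F} (hS : S.Finite) :
    ∃ K : ℝ≥0, ∀ v c, 0 ≤ c → (∀ u ∈ S, |⟪u, v⟫| ≤ c) →
      ‖v‖ ≤ K * c + infDist v (span ℝ S : Set F) := by
  have := FiniteDimensional.span_of_finite ℝ hS
  obtain ⟨K, hK⟩ := exists_norm_le_mul_of_abs_inner_le hS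
  refine ⟨K, fun v c hc hvc => ?_⟩
  set p := (span ℝ S).starProjection v
  have hp : ‖p‖ ≤ K * c := hK p (starProjection_apply_mem _ v) c hc fun u hu => by
    rw [← inner_starProjection_left_eq_right, starProjection_eq_self_iff.2 (subset_span hu)]
    exact hvc u hu
  have hdist : ‖v - p‖ = infDist v (span ℝ S : Set F) := by
    rw [starProjection_minimal, infDist_eq_iInf]
    simp only [dist_eq_norm]
    rfl
  calc ‖v‖ = ‖p + (v - p)‖ := by rw [add_sub_cancel]
    _ ≤ ‖p‖ + ‖v - p‖ := norm_add_le _ _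
    _ ≤ K * c + infDist v (span ℝ S : Set F) := by rw [hdist]; gcongr

end InnerProductSpace

section MedialAxis

variable {n : ℕ} {E : Set (EuclideanSpace ℝ (Fin n))}

theorem inner_sub_sub_nonneg_of_mem_nearestPts {x x' y y' : EuclideanSpace ℝ (Fin n)}
    (hy : y ∈ nearestPts E x) (hy' : y' ∈ nearestPts E x') : 0 ≤ ⟪x' - x, y' - y⟫ :=
  inner_sub_sub_nonneg_of_dist_le (hy.2 ▸ infDist_le_dist_of_mem hy'.1)
    (hy'.2 ▸ infDist_le_dist_of_mem hy.1)

theorem mul_inner_sub_le_of_mem_nearestPts {x x' y y' u u' : EuclideanSpace ℝ (Fin n)}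
    {c η : ℝ} (hy : y ∈ nearestPts E x) (hy' : y' ∈ nearestPts E x')
    (hu : ‖(y - x) - c • u‖ ≤ η) (hu' : ‖(y' - x') - c • u'‖ ≤ η) :
    c * ⟪x' - x, u - u'⟫ ≤ ‖x' - x‖ ^ 2 + 2 * η * ‖x' - x‖ := by
  set v := x' - x
  have hsplit : y' - y = v + ((y' - x') - c • u') - ((y - x) - c • u) - c • (u - u') := by
    simp only [v, smul_sub]; abel
  have hmono := inner_sub_sub_nonneg_of_mem_nearestPts hy hy'
  rw [hsplit, inner_sub_right, inner_sub_right, inner_add_right, real_inner_self_eq_norm_sq,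
    real_inner_smul_right] at hmono
  have h₁ := real_inner_le_norm v ((y' - x') - c • u')
  have h₂ := neg_le_of_abs_le (abs_real_inner_le_norm v ((y - x) - c • u))
  have h₃ := mul_le_mul_of_nonneg_left hu (norm_nonneg v)
  have h₄ := mul_le_mul_of_nonneg_left hu' (norm_nonneg v)
  linarith

theorem exists_mem_nearestPts_norm_sub_smul_lt {k : ℕ} {a : Fin k → EuclideanSpace ℝ (Fin n)}
    (ha : ∀ i, ‖a i‖ = 1) {d ε δ : ℝ} {x : EuclideanSpace ℝ (Fin n)} (hx : x ∈ MSet E a d ε δ)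
    (m : Fin k) : ∃ y ∈ nearestPts E x, ‖(y - x) - d • a m‖ < (d + δ) * ε + δ := by
  obtain ⟨hs, hsd, b, σ, hb, -, hba⟩ := hx
  set s := infDist x E
  obtain ⟨i, rfl⟩ := σ.surjective m
  refine ⟨x + s • b i, (hb i).2, ?_⟩
  have hbi : ‖b i - a (σ i)‖ < ε := hba i
  calc ‖(x + s • b i - x) - d • a (σ i)‖ = ‖s • (b i - a (σ i)) + (s - d) • a (σ i)‖ := by
        congr 1; simp only [smul_sub, sub_smul]; abel
    _ ≤ s * ‖b i - a (σ i)‖ + |s - d| := by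
        grw [norm_add_le, norm_smul, norm_smul, ha, Real.norm_of_nonneg hs.le, Real.norm_eq_abs,
          mul_one]
    _ < (d + δ) * ε + δ := by
        have hsδ : s < d + δ := by linarith [abs_lt.1 hsd]
        have : s * ‖b i - a (σ i)‖ ≤ (d + δ) * ε :=
          mul_le_mul hsδ.le hbi.le (norm_nonneg _) (hs.le.trans hsδ.le)
        linarith

theorem mul_inner_sub_le_of_mem_MSet {k : ℕ} {a : Fin k → EuclideanSpace ℝ (Fin n)}
    (ha : ∀ i, ‖a i‖ = 1) {d ε δ : ℝ} {x x' : EuclideanSpace ℝ (Fin n)}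
    (hx : x ∈ MSet E a d ε δ) (hx' : x' ∈ MSet E a d ε δ) (m m' : Fin k) :
    d * ⟪x' - x, a m - a m'⟫ ≤ ‖x' - x‖ ^ 2 + 2 * ((d + δ) * ε + δ) * ‖x' - x‖ := by
  obtain ⟨y, hy, hym⟩ := exists_mem_nearestPts_norm_sub_smul_lt ha hx m
  obtain ⟨y', hy', hym'⟩ := exists_mem_nearestPts_norm_sub_smul_lt ha hx' m'
  exact mul_inner_sub_le_of_mem_nearestPts hy hy' hym.le hym'.le

theorem abs_inner_le_of_mem_MSet {k : ℕ} {a : Fin k → EuclideanSpace ℝ (Fin n)}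
    (ha : ∀ i, ‖a i‖ = 1) {d θ : ℝ} (hd : 0 < d) (hθ₀ : 0 ≤ θ) (hθ₁ : θ ≤ 1)
    {x v : EuclideanSpace ℝ (Fin n)} (hx : x ∈ MSet E a d θ (d * θ))
    (hxv : x + v ∈ MSet E a d θ (d * θ)) (hv : ‖v‖ < 2 * d * θ) :
    ∀ u ∈ Set.range a -ᵥ Set.range a, |⟪u, v⟫| ≤ 8 * θ * ‖v‖ := by
  have hinner : ∀ m m', ⟪v, a m - a m'⟫ ≤ 8 * θ * ‖v‖ := fun m m' => by
    have h := mul_inner_sub_le_of_mem_MSet ha hx hxv m m'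
    rw [add_sub_cancel_left] at h
    have hv2 : ‖v‖ ^ 2 ≤ 2 * d * θ * ‖v‖ := by
      rw [sq]; exact mul_le_mul_of_nonneg_right hv.le (norm_nonneg v)
    have hη : (d + d * θ) * θ + d * θ ≤ 3 * d * θ := by
      nlinarith [mul_nonneg hd.le hθ₀]
    have hηv := mul_le_mul_of_nonneg_right hη (norm_nonneg v)
    refine le_of_mul_le_mul_left ?_ hd
    linarith
  rintro _ ⟨_, ⟨m, rfl⟩, _, ⟨m', rfl⟩, rfl⟩
  dsimp only
  rw [vsub_eq_sub, real_inner_comm, abs_le]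
  refine ⟨?_, hinner m m'⟩
  have := hinner m' m
  rw [← neg_sub, inner_neg_right] at this
  linarith

end MedialAxis

theorem stmt14_general (n k : ℕ)
    (E : Set (EuclideanSpace ℝ (Fin n)))
    (a : Fin k → EuclideanSpace ℝ (Fin n))
    (ha : ∀ i, ‖a i‖ = 1)
    (d : ℝ) (hd : 0 < d) :
    ∃ ε > 0, ∃ δ > 0, ∃ t > 0, ∃ r > 0,
      ∀ x ∈ MSet E a d ε δ, ∀ v : EuclideanSpace ℝ (Fin n), v ≠ 0 →
        Metric.infDist v ((vectorSpan ℝ (Set.range a) : Submodule ℝ (EuclideanSpace ℝ (Fin n))) :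
          Set (EuclideanSpace ℝ (Fin n))) < r * ‖v‖ →
        ‖v‖ < t → x + v ∉ MSet E a d ε δ := by
  obtain ⟨K, hK⟩ := exists_norm_le_mul_add_infDist_span
    ((Set.finite_range a).vsub (Set.finite_range a))
  -- every constant is a multiple of `θ`, chosen so that `K * (8 * θ) ≤ 1 / 2`
  set θ : ℝ := 1 / (16 * (K + 1))
  have hθ : 0 < θ := by positivity
  have hθK : θ * (K + 1) = 1 / 16 := by simp only [θ]; field_simp
  have hKθ : 0 ≤ K * θ := by positivity
  refine ⟨θ, hθ, d * θ, by positivity, 2 * d * θ, by positivity, 1 / 2, by norm_num,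
    fun x hx v _ hvP hvt hxv => ?_⟩
  have hvS := abs_inner_le_of_mem_MSet ha hd hθ.le (by linarith) hx hxv hvt
  have hvK := hK v _ (by positivity) hvS
  rw [← vectorSpan_def] at hvK
  have : K * (8 * θ * ‖v‖) ≤ ‖v‖ / 2 := by
    nlinarith [norm_nonneg v]
  linarith

theorem stmt14 (n k : ℕ) (hk2 : 2 ≤ k) (hkn : k ≤ n + 1)
    (E : Set (EuclideanSpace ℝ (Fin n))) (hEne : E.Nonempty) (hEcl : IsClosed E)
    (a : Fin k → EuclideanSpace ℝ (Fin n))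
    (ha : ∀ i, ‖a i‖ = 1) (hgeneric : AffineIndependent ℝ a)
    (d : ℝ) (hd : 0 < d) :
    ∃ ε > 0, ∃ δ > 0, ∃ t > 0, ∃ r > 0,
      ∀ x ∈ MSet E a d ε δ, ∀ v : EuclideanSpace ℝ (Fin n), v ≠ 0 →
        Metric.infDist v ((vectorSpan ℝ (Set.range a) : Submodule ℝ (EuclideanSpace ℝ (Fin n))) :
          Set (EuclideanSpace ℝ (Fin n))) < r * ‖v‖ →
        ‖v‖ < t → x + v ∉ MSet E a d ε δ :=
  stmt14_general n k E a ha d hd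
end

section
/- Let E ⊂ ℝ^n be nonempty closed, 2 ≤ k ≤ n+1, a ⊂ S^{n−1} a k-point set in generic position and d > 0. Then there exist ε_{a,d}, δ_{a,d} > 0 such that for all 0 < ε ≤ ε_{a,d} and 0 < δ ≤ δ_{a,d}, the set M(a,d,ε,δ) is (n−k+1)-rectifiable with locally finite (n−k+1)-dimensional Hausdorff measure. -/
open MeasureTheory

/-- A set `S ⊆ ℝⁿ` is countably `m`-rectifiable if, up to an `H^m`-null set, it is covered by
countably many Lipschitz images of `ℝᵐ`. -/
def CountablyRectifiable (m : ℕ) {n : ℕ} (S : Set (EuclideanSpace ℝ (Fin n))) : Prop :=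
  ∃ (f : ℕ → EuclideanSpace ℝ (Fin m) → EuclideanSpace ℝ (Fin n)) (K : ℕ → NNReal),
    (∀ i, LipschitzWith (K i) (f i)) ∧
    μH[m] (S \ ⋃ i, Set.range (f i)) = 0

/-!
If `x + r bᵢ` is a nearest point of `x` (with `r = dist(x, E)`), then for every `y` one has
`dist(y, E)² ≤ ‖y - x - r bᵢ‖²`. Since `bᵢ` is `ε`-close to some `aⱼ`, this estimate at `x`
together with the symmetric one at `y` gives, for `x, y ∈ M(a, d, ε, δ)`,
`|⟪aᵢ - aⱼ, x - y⟫| ≤ 2‖x - y‖² / d + 2ε‖x - y‖`.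
The vectors `aᵢ - aⱼ` span the `(k - 1)`-plane `P` parallel to the affine span of `a`, so for
nearby `x, y` and small `ε` the component of `x - y` along `P` is at most `‖x - y‖ / 2`: locally
the set avoids a cone around `P`. Hence orthogonal projection onto the `(n + 1 - k)`-dimensional
space `Pᗮ` has a Lipschitz inverse on each small ball, so the set is locally a bounded Lipschitz
image of `ℝⁿ⁺¹⁻ᵏ`. A countable dense set of centres gives rectifiability, and Lipschitz images
of bounded sets have finite Hausdorff measure.
-/

open Metric Set Module Submodule
open scoped RealInnerProductSpace NNReal

theorem LipschitzWith.hausdorffMeasure_image_lt_top {m : ℕ} {X : Type*} [EMetricSpace X]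
    [MeasurableSpace X] [BorelSpace X] {f : EuclideanSpace ℝ (Fin m) → X} {K : ℝ≥0}
    (hf : LipschitzWith K f) {T : Set (EuclideanSpace ℝ (Fin m))} (hT : Bornology.IsBounded T) :
    μH[m] (f '' T) < ⊤ := by
  have : Measure.IsAddHaarMeasure (μH[m] : Measure (EuclideanSpace ℝ (Fin m))) := by
    simpa using isAddHaarMeasure_hausdorffMeasure (E := EuclideanSpace ℝ (Fin m))
  calc μH[m] (f '' T) ≤ K ^ (m : ℝ) * μH[m] T := hf.hausdorffMeasure_image_le (by positivity) T
    _ < ⊤ := ENNReal.mul_lt_top (by finiteness) hT.measure_lt_top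

theorem countablyRectifiable_of_forall_inter_ball_subset_range {m n : ℕ}
    {S : Set (EuclideanSpace ℝ (Fin n))} {ρ : ℝ} (hρ : 0 < ρ)
    (h : ∀ z, ∃ (f : EuclideanSpace ℝ (Fin m) → EuclideanSpace ℝ (Fin n)) (K : ℝ≥0),
      LipschitzWith K f ∧ S ∩ ball z ρ ⊆ range f) :
    CountablyRectifiable m S := by
  obtain ⟨z, hz⟩ := TopologicalSpace.exists_dense_seq (EuclideanSpace ℝ (Fin n))
  choose f K hf hS using fun i => h (z i)
  refine ⟨f, K, hf, ?_⟩
  suffices S ⊆ ⋃ i, range (f i) by rw [sdiff_eq_empty.mpr this, measure_empty]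
  intro x hx
  obtain ⟨i, hi⟩ := hz.exists_dist_lt x hρ
  exact mem_iUnion.mpr ⟨i, hS i ⟨hx, mem_ball.mpr hi⟩⟩

theorem exists_lipschitzWith_leftInvOn {X F : Type*} [PseudoMetricSpace X] [NormedAddCommGroup F]
    [NormedSpace ℝ F] [FiniteDimensional ℝ F] {π : F → X} {S : Set F} {L : ℝ≥0}
    (hS : ∀ x ∈ S, ∀ y ∈ S, dist x y ≤ L * dist (π x) (π y)) :
    ∃ (g : X → F) (K : ℝ≥0), LipschitzWith K g ∧ LeftInvOn g π S := by
  have hinj : InjOn π S := fun x hx y hy hxy =>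
    dist_le_zero.mp (by simpa [hxy] using hS x hx y hy)
  have hlip : LipschitzOnWith L (Function.invFunOn π S) (π '' S) := by
    refine LipschitzOnWith.of_dist_le_mul ?_
    rintro _ ⟨x, hx, rfl⟩ _ ⟨y, hy, rfl⟩
    rw [hinj.leftInvOn_invFunOn hx, hinj.leftInvOn_invFunOn hy]
    exact hS x hx y hy
  obtain ⟨g, hg, hgS⟩ := hlip.extend_finite_dimension
  exact ⟨g, _, hg, fun x hx => (hgS ⟨x, hx, rfl⟩).symm.trans (hinj.leftInvOn_invFunOn hx)⟩

section InnerProductSpace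

variable {F : Type*} [NormedAddCommGroup F] [InnerProductSpace ℝ F]

theorem exists_norm_starProjection_le_mul_norm_inner {ι : Type*} [Fintype ι] {u : ι → F}
    (U : Submodule ℝ F) [FiniteDimensional ℝ U] (hU : span ℝ (range u) = U) :
    ∃ C > 0, ∀ v, ‖U.starProjection v‖ ≤ C * ‖fun i => ⟪u i, v⟫‖ := by
  let T : U →ₗ[ℝ] ι → ℝ := LinearMap.pi fun i => (innerₛₗ ℝ (u i)).comp U.subtype
  have hT : ∀ p : U, T p = fun i => ⟪u i, (p : F)⟫ := fun _ => rfl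
  have hker : LinearMap.ker T = ⊥ := by
    refine eq_bot_iff.mpr fun p hp => ?_
    have hperp : (p : F) ∈ Uᗮ := by
      refine (mem_orthogonal _ _).mpr fun w hw => ?_
      rw [← hU] at hw
      induction hw using span_induction with
      | mem _ hw => obtain ⟨i, rfl⟩ := hw; exact congrFun ((hT p).symm.trans hp) i
      | zero => exact inner_zero_left _
      | add _ _ _ _ hw hw' => rw [inner_add_left, hw, hw', add_zero]
      | smul c _ _ hw => rw [inner_smul_left, hw, mul_zero]
    simpa using (disjoint_iff_inf_le.mp U.orthogonal_disjoint) ⟨p.2, hperp⟩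
  obtain ⟨K, hK, hTK⟩ := T.exists_antilipschitzWith hker
  refine ⟨K, hK, fun v => ?_⟩
  have hTv : T (U.orthogonalProjectionOnto v) = fun i => ⟪u i, v⟫ := by
    funext i
    exact inner_orthogonalProjectionOnto_eq_of_mem_left ⟨u i, hU ▸ subset_span ⟨i, rfl⟩⟩ v
  have := ZeroHomClass.bound_of_antilipschitz T hTK (U.orthogonalProjectionOnto v)
  rwa [hTv] at this

theorem norm_le_two_mul_norm_starProjection_orthogonal (K : Submodule ℝ F)
    [K.HasOrthogonalProjection] {v : F} (hv : ‖K.starProjection v‖ ≤ ‖v‖ / 2) :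
    ‖v‖ ≤ 2 * ‖Kᗮ.starProjection v‖ := by
  have := norm_add_le (K.starProjection v) (Kᗮ.starProjection v)
  rw [K.starProjection_add_starProjection_orthogonal] at this
  linarith

theorem AffineIndependent.finrank_orthogonal_vectorSpan [FiniteDimensional ℝ F] {ι : Type*}
    [Fintype ι] [Nonempty ι] {a : ι → F} (ha : AffineIndependent ℝ a) :
    finrank ℝ (vectorSpan ℝ (range a))ᗮ = finrank ℝ F + 1 - Fintype.card ι := by
  have hpos := Fintype.card_pos (α := ι)
  have hspan := ha.finrank_vectorSpan (n := Fintype.card ι - 1) (by omega)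
  have hsum := (vectorSpan ℝ (range a)).finrank_add_finrank_orthogonal
  omega

theorem two_mul_inner_le_of_add_smul_mem {E : Set F} {x b : F} {r : ℝ} (hb : ‖b‖ = 1)
    (hE : x + r • b ∈ E) (y : F) :
    2 * r * ⟪y - x, b⟫ ≤ ‖y - x‖ ^ 2 + r ^ 2 - infDist y E ^ 2 := by
  have hdist : infDist y E ≤ ‖y - x - r • b‖ := by
    simpa [dist_eq_norm, sub_sub] using infDist_le_dist_of_mem hE (x := y)
  have hexpand : ‖y - x - r • b‖ ^ 2 = ‖y - x‖ ^ 2 - 2 * r * ⟪y - x, b⟫ + r ^ 2 := by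
    rw [norm_sub_sq_real, real_inner_smul_right, norm_smul, hb, Real.norm_eq_abs, mul_one, sq_abs]
    ring
  nlinarith [infDist_nonneg (x := y) (s := E)]

theorem exists_lipschitzWith_image_eq_of_norm_sub_le [FiniteDimensional ℝ F] {m : ℕ}
    (Q : Submodule ℝ F) (hQ : finrank ℝ Q = m) {S : Set F} (hSb : Bornology.IsBounded S)
    {L : ℝ≥0} (hS : ∀ x ∈ S, ∀ y ∈ S, ‖x - y‖ ≤ L * ‖Q.starProjection (x - y)‖) :
    ∃ (g : EuclideanSpace ℝ (Fin m) → F) (K : ℝ≥0), LipschitzWith K g ∧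
      ∃ T, Bornology.IsBounded T ∧ g '' T = S := by
  let e : Q ≃ₗᵢ[ℝ] EuclideanSpace ℝ (Fin m) :=
    ((stdOrthonormalBasis ℝ Q).reindex (finCongr hQ)).repr
  let π : F →L[ℝ] EuclideanSpace ℝ (Fin m) :=
    e.toContinuousLinearEquiv.toContinuousLinearMap ∘L Q.orthogonalProjectionOnto
  obtain ⟨g, K, hg, hinv⟩ := exists_lipschitzWith_leftInvOn (π := π) fun x hx y hy => by
    rw [dist_eq_norm, dist_eq_norm, ← map_sub]
    exact (hS x hx y hy).trans_eq (congrArg _ (e.norm_map (Q.orthogonalProjectionOnto _)).symm)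
  exact ⟨g, K, hg, π '' S, π.lipschitz.isBounded_image hSb, hinv.image_image⟩

end InnerProductSpace

section MSet

variable {n k : ℕ} {E : Set (EuclideanSpace ℝ (Fin n))} {a : Fin k → EuclideanSpace ℝ (Fin n)}
  {d ε δ : ℝ} {x y : EuclideanSpace ℝ (Fin n)}

theorem inner_sub_le_of_mem_MSet (hx : x ∈ MSet E a d ε δ) (y : EuclideanSpace ℝ (Fin n))
    (j : Fin k) :
    ⟪y - x, a j⟫ ≤ (‖y - x‖ ^ 2 + infDist x E ^ 2 - infDist y E ^ 2) / (2 * infDist x E)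
      + ε * ‖y - x‖ := by
  obtain ⟨hr, -, b, σ, hb, -, hba⟩ := hx
  have hnear := two_mul_inner_le_of_add_smul_mem (hb (σ.symm j)).1 (hb (σ.symm j)).2.1 y
  have hclose : ⟪y - x, a j - b (σ.symm j)⟫ ≤ ε * ‖y - x‖ := by
    have := hba (σ.symm j)
    rw [Equiv.apply_symm_apply, norm_sub_rev] at this
    nlinarith [real_inner_le_norm (y - x) (a j - b (σ.symm j)), norm_nonneg (y - x)]
  rw [← add_sub_cancel (b (σ.symm j)) (a j), inner_add_right]
  have : ⟪y - x, b (σ.symm j)⟫ ≤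
      (‖y - x‖ ^ 2 + infDist x E ^ 2 - infDist y E ^ 2) / (2 * infDist x E) := by
    rw [le_div_iff₀ (by positivity)]
    linarith
  linarith

theorem inner_sub_sub_le_of_mem_MSet (hd : 0 < d) (hδ : δ ≤ d / 2) (hx : x ∈ MSet E a d ε δ)
    (hy : y ∈ MSet E a d ε δ) (i j : Fin k) :
    ⟪a i - a j, x - y⟫ ≤ 2 * ‖x - y‖ ^ 2 / d + 2 * ε * ‖x - y‖ := by
  have hi := inner_sub_le_of_mem_MSet hy x i
  have hj := inner_sub_le_of_mem_MSet hx y j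
  rw [← neg_sub x y, norm_neg, inner_neg_left] at hj
  have hr : d / 2 < infDist x E := by linarith [(abs_lt.mp hx.2.1).1]
  have hs : d / 2 < infDist y E := by linarith [(abs_lt.mp hy.2.1).1]
  set r := infDist x E
  set s := infDist y E
  set V := ‖x - y‖
  have hr0 : 0 < r := by linarith
  have hs0 : 0 < s := by linarith
  have hsum : (V ^ 2 + s ^ 2 - r ^ 2) / (2 * s) + (V ^ 2 + r ^ 2 - s ^ 2) / (2 * r) ≤
      2 * V ^ 2 / d := by
    have hsplit : (V ^ 2 + s ^ 2 - r ^ 2) / (2 * s) + (V ^ 2 + r ^ 2 - s ^ 2) / (2 * r) =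
        V ^ 2 / (2 * s) + V ^ 2 / (2 * r) - (r + s) * (r - s) ^ 2 / (2 * r * s) := by
      field_simp
      ring
    have hVs : V ^ 2 / (2 * s) ≤ V ^ 2 / d := by gcongr; linarith
    have hVr : V ^ 2 / (2 * r) ≤ V ^ 2 / d := by gcongr; linarith
    have : 0 ≤ (r + s) * (r - s) ^ 2 / (2 * r * s) := by
      apply div_nonneg <;> nlinarith [sq_nonneg (r - s)]
    linarith [show 2 * V ^ 2 / d = V ^ 2 / d + V ^ 2 / d by ring]
  rw [real_inner_comm, inner_sub_right]
  linarith

theorem norm_sub_le_two_mul_norm_starProjection_of_mem_MSet (hd : 0 < d) (hδ : δ ≤ d / 2)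
    {j₀ : Fin k} {C : ℝ} (hC : 0 < C)
    (hP : ∀ v, ‖(vectorSpan ℝ (range a)).starProjection v‖ ≤ C * ‖fun i => ⟪a i - a j₀, v⟫‖)
    (hε : ε ≤ 1 / (8 * C)) (hx : x ∈ MSet E a d ε δ) (hy : y ∈ MSet E a d ε δ)
    (hxy : ‖x - y‖ ≤ d / (8 * C)) :
    ‖x - y‖ ≤ 2 * ‖(vectorSpan ℝ (range a))ᗮ.starProjection (x - y)‖ := by
  apply norm_le_two_mul_norm_starProjection_orthogonal
  set V := ‖x - y‖
  have : Nonempty (Fin k) := ⟨j₀⟩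
  have hinner : ‖fun i => ⟪a i - a j₀, x - y⟫‖ ≤ 2 * V ^ 2 / d + 2 * ε * V := by
    refine (pi_norm_le_iff_of_nonempty _).mpr fun i => ?_
    rw [Real.norm_eq_abs, abs_le]
    have hlow := inner_sub_sub_le_of_mem_MSet hd hδ hx hy j₀ i
    rw [← neg_sub, inner_neg_left] at hlow
    exact ⟨by linarith, inner_sub_sub_le_of_mem_MSet hd hδ hx hy i j₀⟩
  have hV : V * (8 * C) ≤ d := (le_div_iff₀ (by positivity)).mp hxy
  have hεC : ε * (8 * C) ≤ 1 := (le_div_iff₀ (by positivity)).mp hε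
  have h1 : 2 * V ^ 2 / d ≤ V / (4 * C) := by
    rw [div_le_div_iff₀ hd (by positivity)]
    nlinarith [norm_nonneg (x - y)]
  have h2 : 2 * ε * V ≤ V / (4 * C) := by
    rw [le_div_iff₀ (by positivity)]
    nlinarith [norm_nonneg (x - y)]
  calc ‖(vectorSpan ℝ (range a)).starProjection (x - y)‖
      ≤ C * (2 * V ^ 2 / d + 2 * ε * V) := (hP _).trans (by gcongr)
    _ ≤ C * (V / (4 * C) + V / (4 * C)) := by gcongr
    _ = V / 2 := by field_simp; ring

end MSet

theorem stmt15_general (n k : ℕ) (hk2 : 2 ≤ k)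
    (E : Set (EuclideanSpace ℝ (Fin n)))
    (a : Fin k → EuclideanSpace ℝ (Fin n))
    (hgeneric : AffineIndependent ℝ a)
    (d : ℝ) (hd : 0 < d) :
    ∃ εad > 0, ∃ δad > 0, ∀ ε δ : ℝ, 0 < ε → ε ≤ εad → 0 < δ → δ ≤ δad →
      CountablyRectifiable (n + 1 - k) (MSet E a d ε δ) ∧
      ∀ x : EuclideanSpace ℝ (Fin n), ∃ t > 0,
        μH[(n + 1 - k : ℕ)] (MSet E a d ε δ ∩ Metric.ball x t) < ⊤ := by
  have j₀ : Fin k := ⟨0, by omega⟩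
  have : Nonempty (Fin k) := ⟨j₀⟩
  set P := vectorSpan ℝ (range a)
  obtain ⟨C, hC, hPC⟩ := exists_norm_starProjection_le_mul_norm_inner P
    (vectorSpan_range_eq_span_range_vsub_right ℝ a j₀).symm
  have hrank : finrank ℝ Pᗮ = n + 1 - k := by simpa using hgeneric.finrank_orthogonal_vectorSpan
  refine ⟨1 / (8 * C), by positivity, d / 2, by positivity, fun ε δ _ hε _ hδ => ?_⟩
  have hlocal : ∀ z, ∃ (g : EuclideanSpace ℝ (Fin (n + 1 - k)) → EuclideanSpace ℝ (Fin n))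
      (K : ℝ≥0), LipschitzWith K g ∧
        ∃ T, Bornology.IsBounded T ∧ g '' T = MSet E a d ε δ ∩ ball z (d / (16 * C)) := by
    refine fun z => exists_lipschitzWith_image_eq_of_norm_sub_le Pᗮ hrank
      (isBounded_ball.subset inter_subset_right) (L := 2) ?_
    rintro x ⟨hx, hxz⟩ y ⟨hy, hyz⟩
    refine norm_sub_le_two_mul_norm_starProjection_of_mem_MSet hd hδ hC hPC hε hx hy ?_
    rw [← dist_eq_norm]
    linarith [dist_triangle_right x y z, mem_ball.mp hxz, mem_ball.mp hyz,
      show d / (16 * C) + d / (16 * C) = d / (8 * C) by field_simp; ring]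
  have hρ : 0 < d / (16 * C) := by positivity
  refine ⟨countablyRectifiable_of_forall_inter_ball_subset_range hρ fun z => ?_,
    fun z => ⟨_, hρ, ?_⟩⟩
  · obtain ⟨g, K, hg, T, -, hT⟩ := hlocal z
    exact ⟨g, K, hg, hT ▸ image_subset_range g T⟩
  · obtain ⟨g, K, hg, T, hTb, hT⟩ := hlocal z
    exact hT ▸ hg.hausdorffMeasure_image_lt_top hTb

theorem stmt15 (n k : ℕ) (hk2 : 2 ≤ k) (hkn : k ≤ n + 1)
    (E : Set (EuclideanSpace ℝ (Fin n))) (hEne : E.Nonempty) (hEcl : IsClosed E)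
    (a : Fin k → EuclideanSpace ℝ (Fin n))
    (ha : ∀ i, ‖a i‖ = 1) (hgeneric : AffineIndependent ℝ a)
    (d : ℝ) (hd : 0 < d) :
    ∃ εad > 0, ∃ δad > 0, ∀ ε δ : ℝ, 0 < ε → ε ≤ εad → 0 < δ → δ ≤ δad →
      CountablyRectifiable (n + 1 - k) (MSet E a d ε δ) ∧
      ∀ x : EuclideanSpace ℝ (Fin n), ∃ t > 0,
        μH[(n + 1 - k : ℕ)] (MSet E a d ε δ ∩ Metric.ball x t) < ⊤ :=
  stmt15_general n k hk2 E a hgeneric d hd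
end
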